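/- Let R be a commutative ring with total quotient ring T(R), and let * be an operation E ↦ E^* on the set of R-submodules of T(R) satisfying, for all R-submodules E, F of T(R) and all x ∈ T(R): xE^* ⊆ (xE)^*, with equality xE^* = (xE)^* when x is a regular element; E ⊆ F implies E^* ⊆ F^*; E ⊆ E^* and (E^*)^* = E^*. Assume * is of finite type (for every R-submodule E of T(R), E^* is the union of F^* over all finitely generated R-submodules F ⊆ E). Let I be an ideal of R with I^* ∩ R = I. If every minimal prime ideal of I is the radical of an ideal L with L^* = F^* for some finitely generated ideal F of R, then I has only finitely many minimal prime ideals. -/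

import Mathlib

open Pointwise nonZeroDivisors

/-- A "semistar-like" operation `*` on the `R`-submodules of the total quotient ring
`T` of a commutative ring `R`: for all submodules `E, F` and all `x ∈ T`,
`xE^* ⊆ (xE)^*` (with equality when `x` is regular), `E ⊆ F → E^* ⊆ F^*`,
`E ⊆ E^*`, and `(E^*)^* = E^*`. -/
structure StarOperation (R T : Type*) [CommRing R] [CommRing T] [Algebra R T] where
  star : Submodule R T → Submodule R T
  smul_star_le : ∀ (x : T) (E : Submodule R T), x • star E ≤ star (x • E)
  smul_star_of_regular : ∀ x ∈ nonZeroDivisors T, ∀ E : Submodule R T,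
    x • star E = star (x • E)
  mono : ∀ E F : Submodule R T, E ≤ F → star E ≤ star F
  le_star : ∀ E : Submodule R T, E ≤ star E
  star_star : ∀ E : Submodule R T, star (star E) = star E

namespace StarOperation

variable {R T : Type*} [CommRing R] [CommRing T] [Algebra R T]
variable (s : StarOperation R T)

/-- `*` is of finite type: `E^*` is the union of the `F^*` over the finitely
generated submodules `F ⊆ E`. -/
def FiniteType : Prop :=
  ∀ (E : Submodule R T) (x : T),
    x ∈ s.star E ↔ ∃ F : Submodule R T, F.FG ∧ F ≤ E ∧ x ∈ s.star F

/-- `I^*` for an ideal `I` of `R`. -/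
def idealStar (I : Ideal R) : Submodule R T :=
  s.star (Submodule.map (Algebra.linearMap R T) I)

end StarOperation

/-!
Every minimal prime `P` of `I` satisfies `P^* ∩ R = P`: if `x ∈ P^*`, finite type puts `x` in `J^*`
for a finitely generated `J ⊆ P`; as `P` is minimal over `I`, some `t ∉ P` has `t Jⁿ ⊆ I`, hence
`t xⁿ ∈ I^* ∩ R = I ⊆ P`. So for `P = √L` with `L^* = F^*`, the finitely generated ideal `F` lies in `P`
and in no other minimal prime of `I`. If `Min(I)` were infinite, a nonprincipal ultrafilter on it
would converge to the prime `{x | x ∈ P for almost all P}`, which contains some `P₀ ∈ Min(I)`; being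
finitely generated, the ideal `F` attached to `P₀` then lies in almost all `P`, forcing almost all
`P` to equal `P₀`.
-/

namespace Ideal

variable {R : Type*} [CommRing R]

lemma exists_span_singleton_mul_le_of_fg (M : Submonoid R) {I J : Ideal R} (hJ : J.FG)
    (h : ∀ x ∈ J, ∃ m ∈ M, m * x ∈ I) : ∃ m ∈ M, span {m} * J ≤ I := by
  induction J, hJ using Submodule.fg_induction with
  | singleton x =>
    obtain ⟨m, hm, hmx⟩ := h x (Submodule.mem_span_singleton_self x)
    exact ⟨m, hm, by rwa [submodule_span_eq, span_singleton_mul_span_singleton,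
      span_singleton_le_iff_mem]⟩
  | sup J K _ _ hJ hK =>
    obtain ⟨m, hm, hmJ⟩ := hJ fun x hx => h x (mem_sup_left hx)
    obtain ⟨n, hn, hnK⟩ := hK fun x hx => h x (mem_sup_right hx)
    refine ⟨m * n, M.mul_mem hm hn, ?_⟩
    rw [← span_singleton_mul_span_singleton, mul_sup]
    exact sup_le (by rw [mul_right_comm]; exact mul_le_left.trans hmJ)
      (by rw [mul_assoc]; exact mul_le_right.trans hnK)

lemma exists_notMem_span_singleton_mul_pow_le_of_mem_minimalPrimes {I P J : Ideal R}
    (hP : P ∈ I.minimalPrimes) (hJ : J.FG) (hJP : J ≤ P) :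
    ∃ t ∉ P, ∃ n : ℕ, span {t} * J ^ n ≤ I := by
  have hPprime := hP.isPrime
  let K := (I.map (algebraMap R (Localization.AtPrime P))).comap
    (algebraMap R (Localization.AtPrime P))
  have hK : K.radical = P := by
    rw [← comap_radical, IsLocalization.AtPrime.radical_map_of_mem_minimalPrimes _ P I hP]
    exact IsLocalization.under_map_of_isPrime_disjoint P.primeCompl _ hPprime disjoint_compl_left
  obtain ⟨n, hn⟩ := exists_pow_le_of_le_radical_of_fg (hK ▸ hJP) hJ
  obtain ⟨t, ht, htJ⟩ := exists_span_singleton_mul_le_of_fg P.primeCompl hJ.pow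
    fun x hx => (IsLocalization.algebraMap_mem_map_algebraMap_iff P.primeCompl
      (Localization.AtPrime P) I x).mp (hn hx)
  exact ⟨t, ht, n, htJ⟩

def ultralimit (𝒰 : Ultrafilter (Ideal R)) : Ideal R where
  carrier := {x | ∀ᶠ P : Ideal R in 𝒰, x ∈ P}
  add_mem' hx hy := (hx.and hy).mono fun P h => P.add_mem h.1 h.2
  zero_mem' := Filter.Eventually.of_forall fun P => P.zero_mem
  smul_mem' c _ hx := hx.mono fun P h => P.mul_mem_left c h

variable {𝒰 : Ultrafilter (Ideal R)} {J : Ideal R}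

lemma ultralimit_isPrime (h : ∀ᶠ P : Ideal R in 𝒰, P.IsPrime) : (ultralimit 𝒰).IsPrime := by
  refine ⟨fun htop => ?_, fun {x y} hxy => ?_⟩
  · have h1 : (1 : R) ∈ ultralimit 𝒰 := htop ▸ Submodule.mem_top
    obtain ⟨P, hP, h1P⟩ := (h.and h1).exists
    exact hP.ne_top ((eq_top_iff_one P).2 h1P)
  · exact Ultrafilter.eventually_or.mp ((h.and hxy).mono fun P hP => hP.1.mem_or_mem hP.2)

lemma le_ultralimit (h : ∀ᶠ P in 𝒰, J ≤ P) : J ≤ ultralimit 𝒰 :=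
  fun _ hx => h.mono fun _ hP => hP hx

lemma eventually_le_of_fg_le_ultralimit (hJ : J.FG) (h : J ≤ ultralimit 𝒰) :
    ∀ᶠ P in 𝒰, J ≤ P := by
  obtain ⟨S, rfl⟩ := hJ
  exact ((Filter.eventually_all_finset S).2 fun x hx => h (Submodule.subset_span hx)).mono
    fun _ hP => Submodule.span_le.2 hP

theorem finite_minimalPrimes_of_exists_fg_separating {I : Ideal R}
    (h : ∀ P ∈ I.minimalPrimes, ∃ F : Ideal R, F.FG ∧ F ≤ P ∧
      ∀ Q ∈ I.minimalPrimes, F ≤ Q → Q = P) :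
    I.minimalPrimes.Finite := by
  by_contra hinf
  have := Filter.cofinite_inf_principal_neBot_iff.2 hinf
  let 𝒰 := Ultrafilter.of (Filter.cofinite ⊓ Filter.principal I.minimalPrimes)
  have hmin : ∀ᶠ P in 𝒰, P ∈ I.minimalPrimes :=
    Ultrafilter.of_le _ (Filter.mem_inf_of_right (Filter.mem_principal_self _))
  have := ultralimit_isPrime (hmin.mono fun _ hP => hP.isPrime)
  obtain ⟨P₀, hP₀, hP₀le⟩ := exists_minimalPrimes_le (le_ultralimit (hmin.mono fun _ hP => hP.le))
  obtain ⟨F, hF, hFP₀, hsep⟩ := h P₀ hP₀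
  have hconst : ∀ᶠ P in 𝒰, P = P₀ :=
    ((eventually_le_of_fg_le_ultralimit hF (hFP₀.trans hP₀le)).and hmin).mono
      fun P hP => hsep P hP.2 hP.1
  have hne : ∀ᶠ P in 𝒰, P ≠ P₀ :=
    Ultrafilter.of_le _ (Filter.mem_inf_of_left (Set.finite_singleton P₀).compl_mem_cofinite)
  obtain ⟨P, hP, hP'⟩ := (hconst.and hne).exists
  exact hP' hP

end Ideal

lemma Submodule.exists_fg_le_and_map_eq_of_le_map {R M N : Type*} [Semiring R]
    [AddCommMonoid M] [Module R M] [AddCommMonoid N] [Module R N] (f : M →ₗ[R] N)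
    {P : Submodule R M} {F : Submodule R N} (hF : F.FG) (hFP : F ≤ P.map f) :
    ∃ J : Submodule R M, J.FG ∧ J ≤ P ∧ J.map f = F := by
  classical
  obtain ⟨S, rfl⟩ := hF
  obtain ⟨S', hS'P, rfl⟩ := Finset.subset_set_image_iff.1 (subset_span.trans hFP)
  exact ⟨span R S', ⟨S', rfl⟩, span_le.2 hS'P, by rw [map_span, Finset.coe_image]⟩

namespace StarOperation

variable {R T : Type*} [CommRing R] [CommRing T] [Algebra R T] (s : StarOperation R T)

lemma mul_star_le (E F : Submodule R T) : E * s.star F ≤ s.star (E * F) := by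
  refine Submodule.mul_le.2 fun a ha b hb => ?_
  have haF : a • F ≤ E * F := by
    rw [← Submodule.span_singleton_mul]
    exact mul_le_mul_left ((Submodule.span_singleton_le_iff_mem _ _).2 ha) F
  exact s.mono _ _ haF (s.smul_star_le a F (Submodule.smul_mem_pointwise_smul b a _ hb))

lemma star_mul_star_le (E F : Submodule R T) : s.star E * s.star F ≤ s.star (E * F) :=
  calc s.star E * s.star F ≤ s.star (s.star E * F) := s.mul_star_le _ _
    _ ≤ s.star (s.star (E * F)) := s.mono _ _ (by
        rw [mul_comm, mul_comm E]; exact s.mul_star_le F E)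
    _ = s.star (E * F) := s.star_star _

def idealClosure (J : Ideal R) : Ideal R :=
  Submodule.comap (Algebra.linearMap R T) (s.idealStar J)

lemma le_idealClosure (J : Ideal R) : J ≤ s.idealClosure J :=
  fun x hx => s.le_star _ ⟨x, hx, rfl⟩

lemma idealClosure_mono {J K : Ideal R} (h : J ≤ K) : s.idealClosure J ≤ s.idealClosure K :=
  Submodule.comap_mono (s.mono _ _ (Submodule.map_mono h))

lemma idealClosure_mul_le (J K : Ideal R) :
    s.idealClosure J * s.idealClosure K ≤ s.idealClosure (J * K) := by
  refine Submodule.mul_le.2 fun x hx y hy => ?_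
  change algebraMap R T (x * y) ∈ s.star (Submodule.map (Algebra.ofId R T).toLinearMap (J * K))
  rw [map_mul, Submodule.map_mul]
  exact s.star_mul_star_le _ _ (Submodule.mul_mem_mul hx hy)

lemma idealClosure_pow_le (J : Ideal R) (n : ℕ) :
    s.idealClosure J ^ n ≤ s.idealClosure (J ^ n) := by
  induction n with
  | zero => simpa using s.le_idealClosure 1
  | succ n ih =>
    rw [pow_succ, pow_succ]
    exact (Ideal.mul_mono_left ih).trans (s.idealClosure_mul_le _ _)

theorem idealClosure_eq_of_mem_minimalPrimes (hs : s.FiniteType) {I P : Ideal R}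
    (hI : s.idealClosure I = I) (hP : P ∈ I.minimalPrimes) : s.idealClosure P = P := by
  refine le_antisymm (fun x hx => ?_) (s.le_idealClosure P)
  obtain ⟨F, hF, hFP, hxF⟩ := (hs _ _).1 hx
  obtain ⟨J, hJ, hJP, rfl⟩ := Submodule.exists_fg_le_and_map_eq_of_le_map _ hF hFP
  obtain ⟨t, htP, n, htJ⟩ :=
    Ideal.exists_notMem_span_singleton_mul_pow_le_of_mem_minimalPrimes hP hJ hJP
  have htx : t * x ^ n ∈ s.idealClosure I :=
    s.idealClosure_mono htJ <| s.idealClosure_mul_le _ _ <|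
      Ideal.mul_mem_mul (s.le_idealClosure _ (Ideal.mem_span_singleton_self t))
        (s.idealClosure_pow_le J n (Ideal.pow_mem_pow hxF n))
  rw [hI] at htx
  exact hP.isPrime.mem_of_pow_mem n ((hP.isPrime.mem_or_mem (hP.le htx)).resolve_left htP)

theorem fg_le_and_unique_of_idealStar_eq (hs : s.FiniteType) {I P L F : Ideal R}
    (hI : s.idealClosure I = I) (hP : P ∈ I.minimalPrimes) (hLF : s.idealStar L = s.idealStar F)
    (hPL : P = L.radical) : F ≤ P ∧ ∀ Q ∈ I.minimalPrimes, F ≤ Q → Q = P := by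
  have hcl : s.idealClosure L = s.idealClosure F := congrArg (Submodule.comap _) hLF
  have closed {Q} (hQ : Q ∈ I.minimalPrimes) := s.idealClosure_eq_of_mem_minimalPrimes hs hI hQ
  refine ⟨?_, fun Q hQ hFQ => ?_⟩
  · calc F ≤ s.idealClosure F := s.le_idealClosure F
      _ = s.idealClosure L := hcl.symm
      _ ≤ s.idealClosure P := s.idealClosure_mono (hPL ▸ L.le_radical)
      _ = P := closed hP
  · have hLQ : L ≤ Q :=
      calc L ≤ s.idealClosure L := s.le_idealClosure L
        _ = s.idealClosure F := hcl
        _ ≤ s.idealClosure Q := s.idealClosure_mono hFQ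
        _ = Q := closed hQ
    have hPQ : P ≤ Q := hPL ▸ hQ.isPrime.radical_le_iff.2 hLQ
    exact le_antisymm (hQ.2 ⟨hP.isPrime, hP.le⟩ hPQ) hPQ

end StarOperation

theorem minimalPrimes_finite_of_quasiStarIdeal_ring_general {R T : Type*} [CommRing R]
    [CommRing T] [Algebra R T] (s : StarOperation R T)
    (hs : s.FiniteType) (I : Ideal R)
    (hI : Submodule.comap (Algebra.linearMap R T) (s.idealStar I) = I)
    (h : ∀ P ∈ I.minimalPrimes, ∃ L : Ideal R,
      (∃ F : Ideal R, F.FG ∧ s.idealStar L = s.idealStar F) ∧ P = L.radical) :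
    I.minimalPrimes.Finite := by
  refine Ideal.finite_minimalPrimes_of_exists_fg_separating fun P hP => ?_
  obtain ⟨L, ⟨F, hF, hLF⟩, hPL⟩ := h P hP
  exact ⟨F, hF, s.fg_le_and_unique_of_idealStar_eq hs hI hP hLF hPL⟩

/-- Let `R` be a commutative ring with total quotient ring `T`, and let `*` be a
finite type star-like operation on the `R`-submodules of `T`.  Let `I` be an ideal
of `R` with `I^* ∩ R = I`.  If every minimal prime of `I` is the radical of an ideal
`L` with `L^* = F^*` for some finitely generated ideal `F` of `R`, then `I` has only
finitely many minimal primes. -/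
theorem minimalPrimes_finite_of_quasiStarIdeal_ring {R T : Type*} [CommRing R]
    [CommRing T] [Algebra R T] [IsLocalization R⁰ T] (s : StarOperation R T)
    (hs : s.FiniteType) (I : Ideal R)
    (hI : Submodule.comap (Algebra.linearMap R T) (s.idealStar I) = I)
    (h : ∀ P ∈ I.minimalPrimes, ∃ L : Ideal R,
      (∃ F : Ideal R, F.FG ∧ s.idealStar L = s.idealStar F) ∧ P = L.radical) :
    I.minimalPrimes.Finite :=
  minimalPrimes_finite_of_quasiStarIdeal_ring_general s hs I hI h
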